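/- Let b ≥ 2 and g ≥ 3 be integers and ε₁, ε₂ ∈ {1, −1}. Every solution (d₁, d₂, l, m, n) in integers 1 ≤ d₁, d₂ ≤ g−1, n ≥ 0, l, m ≥ 1 of the equation (b+ε₁)·b^n + ε₂ = d₁·(g^l−1)/(g−1) − d₂·(g^m−1)/(g−1) satisfies n < 1.5·l·log g. -/

import Mathlib

/-!
The right-hand side is at most `(g^l - 1) - 1`, since a single digit times a repunit of length `l`
is at most `g^l - 1` and the subtracted repdigit is positive, while the left-hand side is at least
`2^n - 1`. Hence `2^n < g^l`, i.e. `n log 2 < l log g`, and `log 2 > 2/3` gives the bound.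
-/

/-- The equation expressing a Thabit (`ε₁ = 1`) or Williams (`ε₁ = −1`) number
`(b + ε₁)·b^n + ε₂` as a difference of two `g`-repdigits. -/
def DiffRepdigitEq (b g ε₁ ε₂ d₁ d₂ : ℤ) (l m n : ℕ) : Prop :=
  (b + ε₁) * b ^ n + ε₂ = d₁ * ((g ^ l - 1) / (g - 1)) - d₂ * ((g ^ m - 1) / (g - 1))

theorem Int.sub_one_mul_repunit (g : ℤ) (k : ℕ) :
    (g - 1) * ((g ^ k - 1) / (g - 1)) = g ^ k - 1 :=
  Int.mul_ediv_cancel' (by simpa using sub_dvd_pow_sub_pow g 1 k)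

theorem Int.one_le_repunit {g : ℤ} (hg : 1 < g) {k : ℕ} (hk : 1 ≤ k) :
    1 ≤ (g ^ k - 1) / (g - 1) := by
  rw [Int.le_ediv_iff_mul_le (by omega), one_mul]
  linarith [le_self_pow₀ hg.le (by omega : k ≠ 0)]

theorem Int.digit_mul_repunit_le {g d : ℤ} (hg : 1 < g) (hd : d ≤ g - 1) (k : ℕ) :
    d * ((g ^ k - 1) / (g - 1)) ≤ g ^ k - 1 := by
  have hq : 0 ≤ (g ^ k - 1) / (g - 1) :=
    Int.ediv_nonneg (by linarith [one_le_pow₀ (M₀ := ℤ) (n := k) hg.le]) (by omega)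
  calc d * ((g ^ k - 1) / (g - 1)) ≤ (g - 1) * ((g ^ k - 1) / (g - 1)) :=
        mul_le_mul_of_nonneg_right hd hq
    _ = g ^ k - 1 := Int.sub_one_mul_repunit g k

theorem two_pow_sub_one_le_thabit_williams {b ε₁ ε₂ : ℤ} (hb : 2 ≤ b)
    (hε₁ : ε₁ = 1 ∨ ε₁ = -1) (hε₂ : ε₂ = 1 ∨ ε₂ = -1) (n : ℕ) :
    2 ^ n - 1 ≤ (b + ε₁) * b ^ n + ε₂ := by
  have hpow : (2 : ℤ) ^ n ≤ b ^ n := pow_le_pow_left₀ (by norm_num) hb n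
  have hfactor : 1 ≤ b + ε₁ := by rcases hε₁ with rfl | rfl <;> omega
  have hε₂' : -1 ≤ ε₂ := by rcases hε₂ with rfl | rfl <;> norm_num
  nlinarith [one_le_pow₀ (M₀ := ℤ) (n := n) (by omega : (1 : ℤ) ≤ b)]

theorem two_pow_lt_of_diffRepdigitEq {b g ε₁ ε₂ d₁ d₂ : ℤ} {l m n : ℕ} (hb : 2 ≤ b) (hg : 1 < g)
    (hε₁ : ε₁ = 1 ∨ ε₁ = -1) (hε₂ : ε₂ = 1 ∨ ε₂ = -1)
    (hd₁ : d₁ ≤ g - 1) (hd₂ : 1 ≤ d₂) (hm : 1 ≤ m)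
    (heq : DiffRepdigitEq b g ε₁ ε₂ d₁ d₂ l m n) :
    2 ^ n < g ^ l := by
  have hlower := two_pow_sub_one_le_thabit_williams hb hε₁ hε₂ n
  have hfirst := Int.digit_mul_repunit_le hg hd₁ l
  have hsecond : 1 ≤ d₂ * ((g ^ m - 1) / (g - 1)) :=
    one_le_mul_of_one_le_of_one_le hd₂ (Int.one_le_repunit hg hm)
  unfold DiffRepdigitEq at heq
  omega

theorem Real.lt_three_halves_mul_log_of_two_pow_lt {x : ℝ} {l n : ℕ}
    (h : (2 : ℝ) ^ n < x ^ l) :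
    (n : ℝ) < 1.5 * l * Real.log x := by
  have hlog : n * Real.log 2 < l * Real.log x := by
    simpa only [Real.log_pow] using Real.log_lt_log (by positivity) h
  have hlog2 : (2 / 3 : ℝ) < Real.log 2 := by linarith [Real.log_two_gt_d9]
  nlinarith [(Nat.cast_nonneg n : (0 : ℝ) ≤ n)]

theorem stmt_11_general (b g : ℤ) (hb : 2 ≤ b) (hg : 3 ≤ g)
    (ε₁ ε₂ : ℤ) (hε₁ : ε₁ = 1 ∨ ε₁ = -1) (hε₂ : ε₂ = 1 ∨ ε₂ = -1)
    (d₁ d₂ : ℤ) (l m n : ℕ)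
    (hd₁' : d₁ ≤ g - 1) (hd₂ : 1 ≤ d₂)
    (hm : 1 ≤ m)
    (heq : DiffRepdigitEq b g ε₁ ε₂ d₁ d₂ l m n) :
    (n : ℝ) < 1.5 * l * Real.log g := by
  have hpow : 2 ^ n < g ^ l :=
    two_pow_lt_of_diffRepdigitEq hb (by omega) hε₁ hε₂ hd₁' hd₂ hm heq
  exact Real.lt_three_halves_mul_log_of_two_pow_lt (by exact_mod_cast hpow)

/-- Lemma: every solution of the difference equation satisfies `n < 1.5·l·log g`. -/
theorem stmt_11 (b g : ℤ) (hb : 2 ≤ b) (hg : 3 ≤ g)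
    (ε₁ ε₂ : ℤ) (hε₁ : ε₁ = 1 ∨ ε₁ = -1) (hε₂ : ε₂ = 1 ∨ ε₂ = -1)
    (d₁ d₂ : ℤ) (l m n : ℕ)
    (hd₁ : 1 ≤ d₁) (hd₁' : d₁ ≤ g - 1) (hd₂ : 1 ≤ d₂) (hd₂' : d₂ ≤ g - 1)
    (hl : 1 ≤ l) (hm : 1 ≤ m)
    (heq : DiffRepdigitEq b g ε₁ ε₂ d₁ d₂ l m n) :
    (n : ℝ) < 1.5 * l * Real.log g :=
  stmt_11_general b g hb hg ε₁ ε₂ hε₁ hε₂ d₁ d₂ l m n hd₁' hd₂ hm heq
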